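/- Let H be a complex Hilbert space, D ⊆ H a linear subspace, and X_1,…,X_n linear operators mapping D into D, each of which is Hermitian or skew-Hermitian on D. Let m = (m_p) be a sequence of positive reals satisfying (A0), (A1) and (A2). Then for u ∈ D the following are equivalent: (i) there exist C, A > 0 with ‖X_α u‖ ≤ C A^{|α|} m_{|α|} for all α ∈ M(n); (ii) there exist C, A > 0 with |⟨X_α u, u⟩| ≤ C A^{|α|} m_{|α|} for all α ∈ M(n); (iii) u belongs to S_m(X_1,…,X_n), i.e. there exist C, A > 0 with ‖X_α u‖ ≤ C A^{|α|} ∏_{j=1}^n m_{|α|_j} for all α ∈ M(n). -/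

import Mathlib

open scoped ComplexInnerProductSpace

noncomputable section

/-- For a word `α = (i₁, …, i_k)`, `applyWord X α u = X_{i₁} (X_{i₂} ( ⋯ (X_{i_k} u)))`. -/
def applyWord {E : Type*} [NormedAddCommGroup E] [InnerProductSpace ℂ E] {ι : Type*}
    (X : ι → E →ₗ[ℂ] E) (α : List ι) (u : E) : E :=
  α.foldr (fun i v => X i v) u

section Aux

variable {E : Type*} [NormedAddCommGroup E] [InnerProductSpace ℂ E] {ι : Type*}

lemma applyWord_nil (X : ι → E →ₗ[ℂ] E) (u : E) : applyWord X [] u = u := rfl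

lemma applyWord_cons (X : ι → E →ₗ[ℂ] E) (i : ι) (l : List ι) (u : E) :
    applyWord X (i :: l) u = X i (applyWord X l u) := rfl

lemma applyWord_append (X : ι → E →ₗ[ℂ] E) (α β : List ι) (u : E) :
    applyWord X (α ++ β) u = applyWord X α (applyWord X β u) :=
  List.foldr_append ..

lemma applyWord_mem {n : ℕ} (D : Submodule ℂ E) (X : Fin n → E →ₗ[ℂ] E)
    (hXD : ∀ i, ∀ x ∈ D, X i x ∈ D) {u : E} (hu : u ∈ D) (α : List (Fin n)) :
    applyWord X α u ∈ D := by
  induction α with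
  | nil => exact hu
  | cons i l ih => exact hXD i _ ih

lemma abs_inner_applyWord {n : ℕ} (D : Submodule ℂ E) (X : Fin n → E →ₗ[ℂ] E)
    (hXD : ∀ i, ∀ x ∈ D, X i x ∈ D)
    (hherm : ∀ i, (∀ u ∈ D, ∀ v ∈ D, ⟪X i u, v⟫ = ⟪u, X i v⟫) ∨
                  (∀ u ∈ D, ∀ v ∈ D, ⟪X i u, v⟫ = -⟪u, X i v⟫))
    (α : List (Fin n)) :
    ∀ w ∈ D, ∀ v ∈ D,
      ‖⟪applyWord X α w, v⟫‖ = ‖⟪w, applyWord X α.reverse v⟫‖ := by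
  induction α with
  | nil => intro w hw v hv; simp [applyWord_nil]
  | cons i l ih =>
    intro w hw v hv
    have hlw : applyWord X l w ∈ D := applyWord_mem D X hXD hw l
    have hXiv : X i v ∈ D := hXD i v hv
    have step : ‖⟪X i (applyWord X l w), v⟫‖
        = ‖⟪applyWord X l w, X i v⟫‖ := by
      rcases hherm i with h | h
      · rw [h _ hlw _ hv]
      · rw [h _ hlw _ hv, norm_neg]
    rw [applyWord_cons, step, ih w hw (X i v) hXiv]
    have : applyWord X (i :: l).reverse v = applyWord X l.reverse (X i v) := by
      rw [List.reverse_cons, applyWord_append]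
      rfl
    rw [this]

end Aux

section Seq

variable (m : ℕ → ℝ)

lemma ratio_mono (hmpos : ∀ p, 0 < m p)
    (hA1 : ∀ p : ℕ, 1 ≤ p → (m p) ^ 2 ≤ m (p - 1) * m (p + 1)) :
    Monotone (fun p => m (p + 1) / m p) := by
  apply monotone_nat_of_le_succ
  intro p
  have h := hA1 (p + 1) (by omega)
  simp only [Nat.add_sub_cancel] at h
  rw [div_le_div_iff₀ (hmpos p) (hmpos (p + 1))]
  nlinarith [hmpos p, hmpos (p+1), hmpos (p+2)]

lemma m_superadd (hmpos : ∀ p, 0 < m p) (hm0 : m 0 = 1)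
    (hA1 : ∀ p : ℕ, 1 ≤ p → (m p) ^ 2 ≤ m (p - 1) * m (p + 1)) :
    ∀ p q : ℕ, m p * m q ≤ m (p + q) := by
  have hr := ratio_mono m hmpos hA1
  have hcan : ∀ a b : ℝ, b ≠ 0 → b * (a / b) = a := by
    intro a b hb; field_simp
  intro p q
  induction q with
  | zero => simp [hm0]
  | succ q ih =>
    have hrpq : m (q + 1) / m q ≤ m (p + q + 1) / m (p + q) := hr (by omega)
    calc m p * m (q + 1) = (m p * m q) * (m (q + 1) / m q) := by
          rw [mul_assoc, hcan _ _ (hmpos q).ne']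
      _ ≤ m (p + q) * (m (p + q + 1) / m (p + q)) := by
          apply mul_le_mul ih hrpq
            (div_nonneg (hmpos _).le (hmpos _).le) (le_of_lt (hmpos _))
      _ = m (p + q + 1) := hcan _ _ (hmpos _).ne'

lemma prod_m_le (hmpos : ∀ p, 0 < m p) (hm0 : m 0 = 1)
    (hA1 : ∀ p : ℕ, 1 ≤ p → (m p) ^ 2 ≤ m (p - 1) * m (p + 1))
    {κ : Type*} (s : Finset κ) (f : κ → ℕ) :
    ∏ j ∈ s, m (f j) ≤ m (∑ j ∈ s, f j) := by
  induction s using Finset.cons_induction with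
  | empty => simp [hm0]
  | cons a s ha ih =>
    rw [Finset.prod_cons, Finset.sum_cons]
    calc m (f a) * ∏ j ∈ s, m (f j) ≤ m (f a) * m (∑ j ∈ s, f j) := by
          exact mul_le_mul_of_nonneg_left ih (hmpos _).le
      _ ≤ m (f a + ∑ j ∈ s, f j) := m_superadd m hmpos hm0 hA1 _ _

lemma m_le_prod {H : ℝ} (hH : 1 ≤ H) (hmpos : ∀ p, 0 < m p) (hm0 : m 0 = 1)
    (hA2 : ∀ p q, m (p + q) ≤ H ^ (p + q) * m p * m q)
    {κ : Type*} (s : Finset κ) (f : κ → ℕ) :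
    m (∑ j ∈ s, f j) ≤ (H ^ s.card) ^ (∑ j ∈ s, f j) * ∏ j ∈ s, m (f j) := by
  induction s using Finset.cons_induction with
  | empty => simp [hm0]
  | cons a s ha ih =>
    rw [Finset.prod_cons, Finset.sum_cons, Finset.card_cons]
    have hH0 : (0:ℝ) < H := lt_of_lt_of_le one_pos hH
    calc m (f a + ∑ j ∈ s, f j)
        ≤ H ^ (f a + ∑ j ∈ s, f j) * m (f a) * m (∑ j ∈ s, f j) := hA2 _ _
      _ ≤ H ^ (f a + ∑ j ∈ s, f j) * m (f a) *
            ((H ^ s.card) ^ (∑ j ∈ s, f j) * ∏ j ∈ s, m (f j)) := by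
          apply mul_le_mul_of_nonneg_left ih
          exact mul_nonneg (by positivity) (hmpos _).le
      _ = (H ^ ((f a + ∑ j ∈ s, f j) + s.card * ∑ j ∈ s, f j)) *
            (m (f a) * ∏ j ∈ s, m (f j)) := by
          rw [pow_add, ← pow_mul]; ring
      _ ≤ (H ^ ((s.card + 1) * (f a + ∑ j ∈ s, f j))) *
            (m (f a) * ∏ j ∈ s, m (f j)) := by
          apply mul_le_mul_of_nonneg_right _
            (mul_nonneg (hmpos _).le (Finset.prod_nonneg fun j _ => (hmpos _).le))
          apply pow_le_pow_right₀ hH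
          have : ∑ j ∈ s, f j ≤ f a + ∑ j ∈ s, f j := by omega
          calc (f a + ∑ j ∈ s, f j) + s.card * ∑ j ∈ s, f j
              ≤ (f a + ∑ j ∈ s, f j) + s.card * (f a + ∑ j ∈ s, f j) :=
                by exact Nat.add_le_add_left (Nat.mul_le_mul_left _ this) _
            _ = (s.card + 1) * (f a + ∑ j ∈ s, f j) := by ring
      _ = (H ^ (s.card + 1)) ^ (f a + ∑ j ∈ s, f j) *
            (m (f a) * ∏ j ∈ s, m (f j)) := by rw [← pow_mul]

end Seq

lemma sum_count_eq_length {n : ℕ} (α : List (Fin n)) :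
    ∑ j : Fin n, α.count j = α.length := by
  induction α with
  | nil => simp
  | cons a l ih =>
    simp only [List.count_cons, List.length_cons, Finset.sum_add_distrib, ih]
    simp

/-- Remark 3.2.  For Hermitian or skew-Hermitian operators
`X_1, …, X_n` on a common invariant domain `D` and a single sequence `m` satisfying
(A0)–(A2), the following are equivalent for `u ∈ D`:
(i) `‖X_α u‖ ≤ C A^{|α|} m_{|α|}`;
(ii) `|⟨X_α u, u⟩| ≤ C A^{|α|} m_{|α|}`;
(iii) `‖X_α u‖ ≤ C A^{|α|} ∏_j m_{|α|_j}` (i.e. `u ∈ S_𝐦(𝐗)` with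
`m^{(1)} = ⋯ = m^{(n)} = m`). -/
theorem gsr_single_sequence_equivalences
    {E : Type*} [NormedAddCommGroup E] [InnerProductSpace ℂ E] [CompleteSpace E]
    (n : ℕ) (hn : 1 ≤ n) (D : Submodule ℂ E)
    (X : Fin n → E →ₗ[ℂ] E)
    (hXD : ∀ i, ∀ x ∈ D, X i x ∈ D)
    (hherm : ∀ i, (∀ u ∈ D, ∀ v ∈ D, ⟪X i u, v⟫ = ⟪u, X i v⟫) ∨
                  (∀ u ∈ D, ∀ v ∈ D, ⟪X i u, v⟫ = -⟪u, X i v⟫))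
    (m : ℕ → ℝ) (hmpos : ∀ p, 0 < m p)
    (hA0 : m 0 = 1 ∧ m 1 = 1)
    (hA1 : ∀ p : ℕ, 1 ≤ p → (m p) ^ 2 ≤ m (p - 1) * m (p + 1))
    (hA2 : ∃ H : ℝ, 0 < H ∧ ∀ p q, m (p + q) ≤ H ^ (p + q) * m p * m q)
    (u : E) (hu : u ∈ D) :
    ((∃ C A : ℝ, 0 < C ∧ 0 < A ∧ ∀ α : List (Fin n), α ≠ [] →
        ‖applyWord X α u‖ ≤ C * A ^ α.length * m α.length) ↔
      (∃ C A : ℝ, 0 < C ∧ 0 < A ∧ ∀ α : List (Fin n), α ≠ [] →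
        ‖⟪applyWord X α u, u⟫‖ ≤ C * A ^ α.length * m α.length)) ∧
    ((∃ C A : ℝ, 0 < C ∧ 0 < A ∧ ∀ α : List (Fin n), α ≠ [] →
        ‖applyWord X α u‖ ≤ C * A ^ α.length * m α.length) ↔
      (∃ C A : ℝ, 0 < C ∧ 0 < A ∧ ∀ α : List (Fin n), α ≠ [] →
        ‖applyWord X α u‖ ≤ C * A ^ α.length * ∏ j, m (α.count j))) := by
  obtain ⟨hm0, hm1⟩ := hA0
  obtain ⟨H, hHpos, hH2⟩ := hA2
  -- (i) → (ii)
  have h12 : (∃ C A : ℝ, 0 < C ∧ 0 < A ∧ ∀ α : List (Fin n), α ≠ [] →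
        ‖applyWord X α u‖ ≤ C * A ^ α.length * m α.length) →
      (∃ C A : ℝ, 0 < C ∧ 0 < A ∧ ∀ α : List (Fin n), α ≠ [] →
        ‖⟪applyWord X α u, u⟫‖ ≤ C * A ^ α.length * m α.length) := by
    rintro ⟨C, A, hC, hA, h⟩
    refine ⟨C * (‖u‖ + 1), A, by positivity, hA, fun α hα => ?_⟩
    have h1 : ‖⟪applyWord X α u, u⟫‖ ≤ ‖applyWord X α u‖ * ‖u‖ := by
      exact norm_inner_le_norm _ _
    have h2 := h α hα
    have hun : (0:ℝ) ≤ ‖u‖ := norm_nonneg u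
    nlinarith [pow_pos hA α.length, hmpos α.length, norm_nonneg (applyWord X α u)]
  -- (ii) → (i)
  have h21 : (∃ C A : ℝ, 0 < C ∧ 0 < A ∧ ∀ α : List (Fin n), α ≠ [] →
        ‖⟪applyWord X α u, u⟫‖ ≤ C * A ^ α.length * m α.length) →
      (∃ C A : ℝ, 0 < C ∧ 0 < A ∧ ∀ α : List (Fin n), α ≠ [] →
        ‖applyWord X α u‖ ≤ C * A ^ α.length * m α.length) := by
    rintro ⟨C, A, hC, hA, h⟩
    refine ⟨Real.sqrt C, A * H, Real.sqrt_pos.mpr hC, by positivity, fun α hα => ?_⟩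
    set k := α.length with hk
    have hβlen : (α.reverse ++ α).length = 2 * k := by simp [hk]; ring
    have hβne : (α.reverse ++ α) ≠ [] := by
      simp [List.append_eq_nil_iff]; intro h'; exact hα h'
    have key : ‖applyWord X α u‖ ^ 2
        = ‖⟪applyWord X (α.reverse ++ α) u, u⟫‖ := by
      have e1 : ‖⟪applyWord X α u, applyWord X α u⟫‖
          = ‖⟪u, applyWord X α.reverse (applyWord X α u)⟫‖ :=
        abs_inner_applyWord D X hXD hherm α u hu _ (applyWord_mem D X hXD hu α)
      calc ‖applyWord X α u‖ ^ 2
          = ‖⟪applyWord X α u, applyWord X α u⟫‖ := by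
            rw [inner_self_eq_norm_sq_to_K]
            rw [norm_pow]
            simp
        _ = ‖⟪u, applyWord X α.reverse (applyWord X α u)⟫‖ := e1
        _ = ‖⟪u, applyWord X (α.reverse ++ α) u⟫‖ := by
            rw [applyWord_append]
        _ = ‖⟪applyWord X (α.reverse ++ α) u, u⟫‖ := by
            rw [← inner_conj_symm, Complex.norm_conj]
    have hbound := h (α.reverse ++ α) hβne
    rw [hβlen] at hbound
    have hm2k : m (2 * k) ≤ H ^ (2 * k) * m k * m k := by
      have := hH2 k k
      rw [← two_mul] at this
      exact this
    have hsq : ‖applyWord X α u‖ ^ 2 ≤ C * ((A * H) ^ k * m k) ^ 2 := by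
      rw [key]
      calc ‖⟪applyWord X (α.reverse ++ α) u, u⟫‖
          ≤ C * A ^ (2 * k) * m (2 * k) := hbound
        _ ≤ C * A ^ (2 * k) * (H ^ (2 * k) * m k * m k) := by
            apply mul_le_mul_of_nonneg_left hm2k (by positivity)
        _ = C * ((A * H) ^ k * m k) ^ 2 := by ring
    have hx : ‖applyWord X α u‖ ≤ Real.sqrt C * ((A * H) ^ k * m k) := by
      have hnn : (0:ℝ) ≤ (A * H) ^ k * m k :=
        mul_nonneg (pow_nonneg (by positivity) k) (hmpos k).le
      calc ‖applyWord X α u‖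
          = Real.sqrt (‖applyWord X α u‖ ^ 2) :=
            (Real.sqrt_sq (norm_nonneg _)).symm
        _ ≤ Real.sqrt (C * ((A * H) ^ k * m k) ^ 2) := Real.sqrt_le_sqrt hsq
        _ = Real.sqrt C * ((A * H) ^ k * m k) := by
            rw [Real.sqrt_mul hC.le, Real.sqrt_sq hnn]
    calc ‖applyWord X α u‖ ≤ Real.sqrt C * ((A * H) ^ k * m k) := hx
      _ = Real.sqrt C * (A * H) ^ k * m k := by ring
  -- (i) → (iii)
  have h13 : (∃ C A : ℝ, 0 < C ∧ 0 < A ∧ ∀ α : List (Fin n), α ≠ [] →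
        ‖applyWord X α u‖ ≤ C * A ^ α.length * m α.length) →
      (∃ C A : ℝ, 0 < C ∧ 0 < A ∧ ∀ α : List (Fin n), α ≠ [] →
        ‖applyWord X α u‖ ≤ C * A ^ α.length * ∏ j, m (α.count j)) := by
    rintro ⟨C, A, hC, hA, h⟩
    set H' := max H 1 with hH'
    have hH'1 : 1 ≤ H' := le_max_right _ _
    have hH'0 : (0:ℝ) < H' := lt_of_lt_of_le one_pos hH'1
    have hH2' : ∀ p q, m (p + q) ≤ H' ^ (p + q) * m p * m q := by
      intro p q
      calc m (p + q) ≤ H ^ (p + q) * m p * m q := hH2 p q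
        _ ≤ H' ^ (p + q) * m p * m q := by
            apply mul_le_mul_of_nonneg_right _ (le_of_lt (hmpos q))
            apply mul_le_mul_of_nonneg_right _ (le_of_lt (hmpos p))
            exact pow_le_pow_left₀ (le_of_lt hHpos) (le_max_left _ _) _
    refine ⟨C, A * H' ^ n, hC, by positivity, fun α hα => ?_⟩
    set k := α.length with hk
    have hsum : ∑ j : Fin n, α.count j = k := sum_count_eq_length α
    have hle : m k ≤ (H' ^ n) ^ k * ∏ j, m (α.count j) := by
      have := m_le_prod m hH'1 hmpos hm0 hH2' Finset.univ (fun j => α.count j)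
      rw [hsum] at this
      simpa [Finset.card_univ] using this
    calc ‖applyWord X α u‖ ≤ C * A ^ k * m k := h α hα
      _ ≤ C * A ^ k * ((H' ^ n) ^ k * ∏ j, m (α.count j)) := by
          apply mul_le_mul_of_nonneg_left hle (by positivity)
      _ = C * (A * H' ^ n) ^ k * ∏ j, m (α.count j) := by
          rw [mul_pow]; ring
  -- (iii) → (i)
  have h31 : (∃ C A : ℝ, 0 < C ∧ 0 < A ∧ ∀ α : List (Fin n), α ≠ [] →
        ‖applyWord X α u‖ ≤ C * A ^ α.length * ∏ j, m (α.count j)) →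
      (∃ C A : ℝ, 0 < C ∧ 0 < A ∧ ∀ α : List (Fin n), α ≠ [] →
        ‖applyWord X α u‖ ≤ C * A ^ α.length * m α.length) := by
    rintro ⟨C, A, hC, hA, h⟩
    refine ⟨C, A, hC, hA, fun α hα => ?_⟩
    have hle : ∏ j, m (α.count j) ≤ m α.length := by
      have := prod_m_le m hmpos hm0 hA1 Finset.univ (fun j => α.count j)
      rwa [sum_count_eq_length α] at this
    calc ‖applyWord X α u‖ ≤ C * A ^ α.length * ∏ j, m (α.count j) := h α hα
      _ ≤ C * A ^ α.length * m α.length := by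
          apply mul_le_mul_of_nonneg_left hle (by positivity)
  exact ⟨⟨h12, h21⟩, ⟨h13, h31⟩⟩
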